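/- For fixed α ∈ ℂ*, the affine cubic surface x₁x₂x₃ − x₁ − αx₂ − x₃ + α + 1 = 0 in ℂ³ is singular if and only if α = 1, and for α = 1 its unique singular point is (1,1,1), which is of type A₁. -/
import Mathlib


open MvPolynomial

/-- The family of cubic surfaces `x₁x₂x₃ − x₁ − αx₂ − x₃ + α + 1 = 0`
(monodromy spaces for Painlevé II, family (−,−,3)). -/
noncomputable def cubicPII (α : ℂ) : MvPolynomial (Fin 3) ℂ :=
  X 0 * X 1 * X 2 - X 0 - C α * X 1 - X 2 + C α + 1

/-- A singular point of the affine surface `F = 0`. -/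
def SingPt (F : MvPolynomial (Fin 3) ℂ) (p : Fin 3 → ℂ) : Prop :=
  eval p F = 0 ∧ ∀ i : Fin 3, eval p (pderiv i F) = 0

/-- Type `A₁`: nondegenerate Hessian. -/
def IsA1 (F : MvPolynomial (Fin 3) ℂ) (p : Fin 3 → ℂ) : Prop :=
  (Matrix.of fun i j : Fin 3 => eval p (pderiv i (pderiv j F))).det ≠ 0

/-- A singular point forces `α = 1` and `p = (1,1,1)`. -/
lemma cubicPII_sing_pt (α : ℂ) (p : Fin 3 → ℂ) (h : SingPt (cubicPII α) p) :
    α = 1 ∧ p 0 = 1 ∧ p 1 = 1 ∧ p 2 = 1 := by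
  obtain ⟨hF, hd⟩ := h
  have h0 := hd 0; have h1 := hd 1; have h2 := hd 2
  simp [cubicPII, pderiv_X] at hF h0 h1 h2
  have hv : p 1 ≠ 0 := by
    intro hv; rw [hv] at h2; simp at h2
  have hw : p 2 = p 0 := mul_left_cancel₀ hv (by linear_combination h0 - h2)
  rw [hw] at h1 hF
  have hu : α + 1 = 2 * p 0 := by linear_combination hF - p 1 * h1
  have key : (α - 1) ^ 2 = 0 := by linear_combination (α + 1 + 2 * p 0) * hu + 4 * h1
  have hα1 : α = 1 := by
    have := pow_eq_zero_iff (two_ne_zero) |>.mp key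
    linear_combination this
  have hp0 : p 0 = 1 := by rw [hα1] at hu; linear_combination -hu / 2
  have hp1 : p 1 = 1 := by rw [hp0] at h2; linear_combination h2
  exact ⟨hα1, hp0, hp1, hw.trans hp0⟩

/-- `(1,1,1)` is a singular point for `α = 1`. -/
lemma cubicPII_sing_one : SingPt (cubicPII 1) ![1, 1, 1] := by
  constructor
  · simp [cubicPII]
  · intro i
    fin_cases i <;> simp [cubicPII, pderiv_X]

/-- The singular point `(1,1,1)` is of type `A₁`. -/
lemma cubicPII_a1_one : IsA1 (cubicPII 1) ![1, 1, 1] := by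
  unfold IsA1
  rw [Matrix.det_fin_three]
  simp [cubicPII, pderiv_X]

/-- For `α ∈ ℂ*`, the surface `x₁x₂x₃ − x₁ − αx₂ − x₃ + α + 1 = 0` is singular iff
`α = 1`, and for `α = 1` its unique singular point is `(1,1,1)`, of type `A₁`. -/
theorem stmt_6 (α : ℂ) (hα : α ≠ 0) :
    ((∃ p, SingPt (cubicPII α) p) ↔ α = 1) ∧
    (α = 1 →
      (∀ p, SingPt (cubicPII α) p ↔ p = ![1, 1, 1]) ∧
      IsA1 (cubicPII α) ![1, 1, 1]) := by
  refine ⟨⟨fun ⟨p, hp⟩ => (cubicPII_sing_pt α p hp).1,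
    fun h => h ▸ ⟨![1, 1, 1], cubicPII_sing_one⟩⟩, fun h => ?_⟩
  subst h
  refine ⟨fun p => ⟨fun hp => ?_, fun hp => hp ▸ cubicPII_sing_one⟩, cubicPII_a1_one⟩
  obtain ⟨-, h0, h1, h2⟩ := cubicPII_sing_pt 1 p hp
  funext i
  fin_cases i <;> simpa
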